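/- Let f₁ : M → N₁ be a pure embedding of R-modules and f₂ : M → N₂ an R-homomorphism, and let P = (N₁ ⊕ N₂)/D with D = {(f₁(m), −f₂(m)) : m ∈ M} be their pushout. Then the canonical map f̄₁ : N₂ → P, n₂ ↦ [(0, n₂)], is a pure embedding; moreover, if f₂ is also a pure embedding, then the canonical map f̄₂ : N₁ → P, n₁ ↦ [(n₁, 0)], is a pure embedding. -/
import Mathlib

universe u

/-- `A` is a pure submodule of its ambient module: every finite system of
`R`-linear equations `∑ j, r i j • x j = a i` with constants `a i ∈ A` that has
a solution in the ambient module has a solution in `A`. -/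
def IsPureSubmodule {R : Type*} [Ring R] {M : Type*} [AddCommGroup M] [Module R M]
    (A : Submodule R M) : Prop :=
  ∀ (m n : ℕ) (r : Fin m → Fin n → R) (a : Fin m → M),
    (∀ i, a i ∈ A) →
    (∃ x : Fin n → M, ∀ i, (∑ j, r i j • x j) = a i) →
    ∃ x : Fin n → M, (∀ j, x j ∈ A) ∧ ∀ i, (∑ j, r i j • x j) = a i

/-- A pure embedding is an injective linear map whose image is a pure submodule
of its codomain. -/
def IsPureEmbedding {R : Type*} [Ring R] {M N : Type*} [AddCommGroup M] [Module R M]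
    [AddCommGroup N] [Module R N] (f : M →ₗ[R] N) : Prop :=
  Function.Injective f ∧ IsPureSubmodule (LinearMap.range f)

theorem stmt3 {R M N₁ N₂ : Type u} [Ring R] [AddCommGroup M] [Module R M]
    [AddCommGroup N₁] [Module R N₁] [AddCommGroup N₂] [Module R N₂]
    (f₁ : M →ₗ[R] N₁) (f₂ : M →ₗ[R] N₂) (hf₁ : IsPureEmbedding f₁) :
    -- `f̄₁ : N₂ → (N₁ ⊕ N₂)/D`, `n₂ ↦ [(0, n₂)]`, is a pure embedding, where
    -- `D = {(f₁ m, -f₂ m) : m ∈ M}` is the range of `f₁.prod (-f₂)`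
    IsPureEmbedding ((LinearMap.range (f₁.prod (-f₂))).mkQ.comp (LinearMap.inr R N₁ N₂)) ∧
    -- moreover, if `f₂` is also a pure embedding, then `f̄₂ : N₁ → P`, `n₁ ↦ [(n₁, 0)]`,
    -- is a pure embedding
    (IsPureEmbedding f₂ →
      IsPureEmbedding ((LinearMap.range (f₁.prod (-f₂))).mkQ.comp (LinearMap.inl R N₁ N₂))) := by
  set Q := LinearMap.range (f₁.prod (-f₂)) with hQdef
  have memQ : ∀ z : N₁ × N₂, z ∈ Q → ∃ m, f₁ m = z.1 ∧ -(f₂ m) = z.2 := by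
    rintro z ⟨m, rfl⟩
    exact ⟨m, rfl, rfl⟩
  set g₁ := Q.mkQ.comp (LinearMap.inr R N₁ N₂) with hg₁
  set g₂ := Q.mkQ.comp (LinearMap.inl R N₁ N₂) with hg₂
  constructor
  · constructor
    · -- injectivity of g₁
      intro a b h
      have h' : Q.mkQ ((0 : N₁), a) = Q.mkQ ((0 : N₁), b) := h
      rw [Submodule.mkQ_apply, Submodule.mkQ_apply, Submodule.Quotient.eq] at h'
      obtain ⟨m, hm1, hm2⟩ := memQ _ h'
      have hm0 : m = 0 := hf₁.1 (show f₁ m = f₁ 0 by simpa using hm1)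
      have : -(f₂ m) = a - b := hm2
      rw [hm0] at this
      simp only [map_zero, neg_zero] at this
      exact sub_eq_zero.mp this.symm
    · -- purity of range g₁
      rintro k n r a ha ⟨x, hx⟩
      choose b hb using fun i => LinearMap.mem_range.mp (ha i)
      choose p hp using fun j => Submodule.Quotient.mk_surjective Q (x j)
      have key : ∀ i, ∃ mi : M, f₁ mi = (∑ j, r i j • (p j).1) ∧
          -(f₂ mi) = (∑ j, r i j • (p j).2) - b i := by
        intro i
        have h1 : Q.mkQ (∑ j, r i j • p j) = a i := by
          rw [map_sum]
          simp only [map_smul, Submodule.mkQ_apply, hp]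
          exact hx i
        have h2 : Q.mkQ ((0 : N₁), b i) = a i := hb i
        have h3 : (∑ j, r i j • p j) - ((0 : N₁), b i) ∈ Q := by
          rw [← Submodule.Quotient.eq, ← Submodule.mkQ_apply, ← Submodule.mkQ_apply,
            h1, h2]
        obtain ⟨m, hm1, hm2⟩ := memQ _ h3
        refine ⟨m, ?_, ?_⟩
        · rw [hm1]; simp [Prod.fst_sum]
        · rw [hm2]; simp [Prod.snd_sum]
      choose mi hmi1 hmi2 using key
      -- apply purity of f₁ to the first-component system
      obtain ⟨u, hu1, hu2⟩ := hf₁.2 k n r (fun i => f₁ (mi i))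
        (fun i => LinearMap.mem_range.mpr ⟨mi i, rfl⟩)
        ⟨fun j => (p j).1, fun i => (hmi1 i).symm⟩
      choose w hw using fun j => LinearMap.mem_range.mp (hu1 j)
      have hwsum : ∀ i, (∑ j, r i j • w j) = mi i := by
        intro i
        apply hf₁.1
        rw [map_sum]
        simp only [map_smul, hw]
        exact hu2 i
      refine ⟨fun j => g₁ ((p j).2 + f₂ (w j)), fun j => ⟨_, rfl⟩, fun i => ?_⟩
      have : (∑ j, r i j • ((p j).2 + f₂ (w j))) = b i := by
        have : (∑ j, r i j • ((p j).2 + f₂ (w j)))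
            = (∑ j, r i j • (p j).2) + f₂ (∑ j, r i j • w j) := by
          rw [map_sum, ← Finset.sum_add_distrib]
          simp [smul_add]
        rw [this, hwsum i]
        have := hmi2 i
        have h2 : f₂ (mi i) = b i - (∑ j, r i j • (p j).2) := by
          have := congrArg Neg.neg this
          simpa [neg_sub] using this
        rw [h2]; abel
      calc (∑ j, r i j • g₁ ((p j).2 + f₂ (w j)))
          = g₁ (∑ j, r i j • ((p j).2 + f₂ (w j))) := by
            rw [map_sum]; simp only [map_smul]
        _ = g₁ (b i) := by rw [this]
        _ = a i := hb i
  · -- second part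
    intro hf₂
    constructor
    · intro a b h
      have h' : Q.mkQ (a, (0 : N₂)) = Q.mkQ (b, (0 : N₂)) := h
      rw [Submodule.mkQ_apply, Submodule.mkQ_apply, Submodule.Quotient.eq] at h'
      obtain ⟨m, hm1, hm2⟩ := memQ _ h'
      have hm0 : m = 0 := hf₂.1 (by
        have : -(f₂ m) = (0 : N₂) := by simpa using hm2
        simpa [neg_eq_zero] using this)
      have : f₁ m = a - b := hm1
      rw [hm0] at this
      simp only [map_zero] at this
      exact sub_eq_zero.mp this.symm
    · rintro k n r a ha ⟨x, hx⟩
      choose b hb using fun i => LinearMap.mem_range.mp (ha i)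
      choose p hp using fun j => Submodule.Quotient.mk_surjective Q (x j)
      have key : ∀ i, ∃ mi : M, f₁ mi = (∑ j, r i j • (p j).1) - b i ∧
          -(f₂ mi) = (∑ j, r i j • (p j).2) := by
        intro i
        have h1 : Q.mkQ (∑ j, r i j • p j) = a i := by
          rw [map_sum]
          simp only [map_smul, Submodule.mkQ_apply, hp]
          exact hx i
        have h2 : Q.mkQ (b i, (0 : N₂)) = a i := hb i
        have h3 : (∑ j, r i j • p j) - (b i, (0 : N₂)) ∈ Q := by
          rw [← Submodule.Quotient.eq, ← Submodule.mkQ_apply, ← Submodule.mkQ_apply,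
            h1, h2]
        obtain ⟨m, hm1, hm2⟩ := memQ _ h3
        refine ⟨m, ?_, ?_⟩
        · rw [hm1]; simp [Prod.fst_sum]
        · rw [hm2]; simp [Prod.snd_sum]
      choose mi hmi1 hmi2 using key
      obtain ⟨u, hu1, hu2⟩ := hf₂.2 k n r (fun i => -(f₂ (mi i)))
        (fun i => LinearMap.mem_range.mpr ⟨-(mi i), by simp⟩)
        ⟨fun j => (p j).2, fun i => (hmi2 i).symm⟩
      choose w hw using fun j => LinearMap.mem_range.mp (hu1 j)
      have hwsum : ∀ i, (∑ j, r i j • w j) = -(mi i) := by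
        intro i
        apply hf₂.1
        rw [map_sum]
        simp only [map_smul, hw, map_neg]
        exact hu2 i
      refine ⟨fun j => g₂ ((p j).1 + f₁ (w j)), fun j => ⟨_, rfl⟩, fun i => ?_⟩
      have : (∑ j, r i j • ((p j).1 + f₁ (w j))) = b i := by
        have : (∑ j, r i j • ((p j).1 + f₁ (w j)))
            = (∑ j, r i j • (p j).1) + f₁ (∑ j, r i j • w j) := by
          rw [map_sum, ← Finset.sum_add_distrib]
          simp [smul_add]
        rw [this, hwsum i, map_neg]
        have h2 : f₁ (mi i) = (∑ j, r i j • (p j).1) - b i := hmi1 i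
        rw [h2]; abel
      calc (∑ j, r i j • g₂ ((p j).1 + f₁ (w j)))
          = g₂ (∑ j, r i j • ((p j).1 + f₁ (w j))) := by
            rw [map_sum]; simp only [map_smul]
        _ = g₂ (b i) := by rw [this]
        _ = a i := hb i
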